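/- For every v in the immersed trial space U_T (so in particular v(a) = v(b) = 0), the total weighted sum of fluxes at all generalized Gauss points vanishes: Σ_{i=1}^{N} Σ_{j=1}^{p} A_{i,j} β(g_{i,j}) v′(g_{i,j}) = 0. -/

import Mathlib

/-!
On every element, `β v'` agrees off `α` with a single polynomial `F` of degree `≤ p - 1`; on the
interface element this is because the jump conditions make all derivatives of
`β⁻ (v⁻)' - β⁺ (v⁺)'` vanish at `α`. The Gauss rule is exact for `F`, so the weighted flux sum of
an element is `∫ F / β = ∫ v' = v(xᵢ) - v(xᵢ₋₁)`, and the sum over elements telescopes to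
`v(b) - v(a) = 0`.
-/

open Set

/-- The piecewise-constant diffusion coefficient with interface point `α`. -/
noncomputable def betaPW (βm βp α : ℝ) : ℝ → ℝ := fun t => if t < α then βm else βp

/-- Membership in the immersed trial space `U_T`: continuous on `[a,b]`, zero boundary
values, a polynomial of degree ≤ p on each non-interface element `[x_{i-1}, x_i]` (i ≠ k),
and on the interface element `[x_{k-1}, x_k]` a continuous piecewise polynomial of degree ≤ p
satisfying the derivative jump conditions at the interface `α`. -/
def MemUT (p N k : ℕ) (a b α βm βp : ℝ) (x : ℕ → ℝ) (v : ℝ → ℝ) : Prop :=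
  ContinuousOn v (Set.Icc a b) ∧ v a = 0 ∧ v b = 0 ∧
  (∀ i, 1 ≤ i → i ≤ N → i ≠ k → ∃ q : Polynomial ℝ, q.natDegree ≤ p ∧
    ∀ y ∈ Set.Icc (x (i - 1)) (x i), v y = q.eval y) ∧
  ∃ qm qp : Polynomial ℝ, qm.natDegree ≤ p ∧ qp.natDegree ≤ p ∧
    (∀ y ∈ Set.Icc (x (k - 1)) α, v y = qm.eval y) ∧
    (∀ y ∈ Set.Icc α (x k), v y = qp.eval y) ∧
    ∀ j, 1 ≤ j → j ≤ p →
      βm * ((⇑Polynomial.derivative)^[j] qm).eval α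
        = βp * ((⇑Polynomial.derivative)^[j] qp).eval α

open MeasureTheory Polynomial

namespace Polynomial

theorem natDegree_C_mul_derivative_le {R : Type*} [Semiring R] {q : R[X]} {p : ℕ}
    (c : R) (hq : q.natDegree ≤ p) : (C c * derivative q).natDegree ≤ p - 1 :=
  (natDegree_C_mul_le _ _).trans <|
    (natDegree_derivative_le q).trans (Nat.sub_le_sub_right hq 1)

variable {R : Type*} [CommRing R] [NoZeroDivisors R] [CharZero R]

theorem eq_zero_of_forall_isRoot_iterate_derivative {f : R[X]} {r : R}
    (h : ∀ n, ((⇑derivative)^[n] f).IsRoot r) : f = 0 := by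
  by_contra hf
  exact lt_irrefl _ ((lt_rootMultiplicity_iff_isRoot_iterate_derivative hf).2 fun m _ => h m)

theorem C_mul_derivative_eq_of_iterate_derivative_eval_eq {f g : R[X]} {n : ℕ} {c d r : R}
    (hf : f.natDegree ≤ n) (hg : g.natDegree ≤ n)
    (h : ∀ j, 1 ≤ j → j ≤ n →
      c * ((⇑derivative)^[j] f).eval r = d * ((⇑derivative)^[j] g).eval r) :
    C c * derivative f = C d * derivative g := by
  set E := C c * f - C d * g
  have hE : E.natDegree ≤ n := (natDegree_sub_le _ _).trans
    (max_le ((natDegree_C_mul_le _ _).trans hf) ((natDegree_C_mul_le _ _).trans hg))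
  suffices derivative E = 0 by
    rwa [derivative_sub, derivative_C_mul, derivative_C_mul, sub_eq_zero] at this
  refine eq_zero_of_forall_isRoot_iterate_derivative (r := r) fun j => ?_
  rw [← Function.iterate_succ_apply derivative]
  rcases le_or_gt (j + 1) n with hj | hj
  · simp only [IsRoot, E, iterate_derivative_sub, iterate_derivative_C_mul, eval_sub, eval_mul,
      eval_C, h (j + 1) le_add_self hj, sub_self]
  · rw [iterate_derivative_eq_zero (hE.trans_lt hj)]
    exact eval_zero

theorem hasDerivAt_of_eqOn_Icc {v : ℝ → ℝ} {q : ℝ[X]} {s t y : ℝ}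
    (hv : ∀ z ∈ Icc s t, v z = q.eval z) (hy : y ∈ Ioo s t) :
    HasDerivAt v ((derivative q).eval y) y :=
  (q.hasDerivAt y).congr_of_eventuallyEq <|
    Filter.eventuallyEq_of_mem (Ioo_mem_nhds hy.1 hy.2) fun z hz => hv z (Ioo_subset_Icc_self hz)

end Polynomial

theorem Finset.sum_Icc_one_sub_pred {M : Type*} [AddCommGroup M] (f : ℕ → M) (n : ℕ) :
    ∑ i ∈ Finset.Icc 1 n, (f i - f (i - 1)) = f n - f 0 := by
  induction n with
  | zero => simp
  | succ n ih =>
    rw [Finset.sum_Icc_succ_top (by omega), ih, Nat.add_sub_cancel]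
    abel

section betaPW

variable {βm βp α : ℝ}

theorem betaPW_of_lt {t : ℝ} (ht : t < α) : betaPW βm βp α t = βm := if_pos ht

theorem betaPW_of_le {t : ℝ} (ht : α ≤ t) : betaPW βm βp α t = βp := if_neg ht.not_gt

theorem betaPW_ne_zero (hβm : βm ≠ 0) (hβp : βp ≠ 0) (t : ℝ) : betaPW βm βp α t ≠ 0 := by
  unfold betaPW
  split_ifs <;> assumption

theorem betaPW_eq_of_notMem_Ioc {s t : ℝ} (hst : s ≤ t) (hα : α ∉ Ioc s t) :
    betaPW βm βp α s = betaPW βm βp α t := by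
  rcases lt_or_ge s α with hs | hs
  · have ht : t < α := not_le.1 fun h => hα ⟨hs, h⟩
    rw [betaPW_of_lt hs, betaPW_of_lt ht]
  · rw [betaPW_of_le hs, betaPW_of_le (hs.trans hst)]

theorem betaPW_inv (t : ℝ) : (betaPW βm βp α t)⁻¹ = betaPW βm⁻¹ βp⁻¹ α t := by
  unfold betaPW
  split_ifs <;> rfl

theorem intervalIntegrable_betaPW (s t : ℝ) : IntervalIntegrable (betaPW βm βp α) volume s t := by
  rcases le_total βm βp with h | h
  · refine Monotone.intervalIntegrable fun y z hyz => ?_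
    unfold betaPW
    split_ifs <;> first | exact le_rfl | exact h | linarith
  · refine Antitone.intervalIntegrable fun y z hyz => ?_
    unfold betaPW
    split_ifs <;> first | exact le_rfl | exact h | linarith

theorem Polynomial.intervalIntegrable_eval_div_betaPW (F : ℝ[X]) (s t : ℝ) :
    IntervalIntegrable (fun y => F.eval y / betaPW βm βp α y) volume s t := by
  simp only [div_eq_mul_inv, betaPW_inv]
  exact (intervalIntegrable_betaPW s t).continuousOn_mul F.continuous.continuousOn

end betaPW

section flux

variable {p : ℕ} {s t α βm βp : ℝ} {v : ℝ → ℝ}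

theorem exists_flux_of_eqOn_Icc (hβm : βm ≠ 0) (hβp : βp ≠ 0)
    (hα : α ∉ Ioc s t) {q : ℝ[X]} (hq : q.natDegree ≤ p)
    (hv : ∀ y ∈ Icc s t, v y = q.eval y) :
    ∃ F : ℝ[X], F.natDegree ≤ p - 1 ∧
      ∀ y ∈ Ioo s t \ {α}, HasDerivAt v (F.eval y / betaPW βm βp α y) y := by
  refine ⟨C (betaPW βm βp α t) * derivative q,
    natDegree_C_mul_derivative_le _ hq, fun y hy => ?_⟩
  have hβy : betaPW βm βp α y = betaPW βm βp α t :=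
    betaPW_eq_of_notMem_Ioc hy.1.2.le fun h => hα ⟨hy.1.1.trans h.1, h.2⟩
  refine (q.hasDerivAt_of_eqOn_Icc hv hy.1).congr_deriv ?_
  rw [eval_mul, eval_C, hβy, mul_div_cancel_left₀ _ (betaPW_ne_zero hβm hβp t)]

theorem exists_flux_of_interface (hβm : βm ≠ 0) (hβp : βp ≠ 0) {qm qp : ℝ[X]}
    (hqm : qm.natDegree ≤ p) (hqp : qp.natDegree ≤ p)
    (hvm : ∀ y ∈ Icc s α, v y = qm.eval y) (hvp : ∀ y ∈ Icc α t, v y = qp.eval y)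
    (hjump : ∀ j, 1 ≤ j → j ≤ p →
      βm * ((⇑derivative)^[j] qm).eval α = βp * ((⇑derivative)^[j] qp).eval α) :
    ∃ F : ℝ[X], F.natDegree ≤ p - 1 ∧
      ∀ y ∈ Ioo s t \ {α}, HasDerivAt v (F.eval y / betaPW βm βp α y) y := by
  have hflux := C_mul_derivative_eq_of_iterate_derivative_eval_eq hqm hqp hjump
  refine ⟨C βm * derivative qm,
    natDegree_C_mul_derivative_le _ hqm, fun y ⟨⟨hsy, hyt⟩, hyα⟩ => ?_⟩
  rcases lt_or_gt_of_ne hyα with hy | hy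
  · refine (qm.hasDerivAt_of_eqOn_Icc hvm ⟨hsy, hy⟩).congr_deriv ?_
    rw [betaPW_of_lt hy, eval_mul, eval_C, mul_div_cancel_left₀ _ hβm]
  · refine (qp.hasDerivAt_of_eqOn_Icc hvp ⟨hy, hyt⟩).congr_deriv ?_
    rw [betaPW_of_le hy.le, hflux, eval_mul, eval_C, mul_div_cancel_left₀ _ hβp]

end flux

theorem sum_mul_deriv_eq_sub_of_quadrature {s t : ℝ} (hst : s ≤ t) {v w F : ℝ → ℝ}
    {E : Set ℝ} (hE : E.Countable) (hv : ContinuousOn v (Icc s t))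
    (hderiv : ∀ y ∈ Ioo s t \ E, HasDerivAt v (F y / w y) y)
    (hint : IntervalIntegrable (fun y => F y / w y) volume s t)
    {ι : Type*} {S : Finset ι} {A g : ι → ℝ} (hg : ∀ j ∈ S, g j ∈ Ioo s t \ E)
    (hw : ∀ j ∈ S, w (g j) ≠ 0)
    (hquad : ∑ j ∈ S, A j * F (g j) = ∫ y in s..t, F y / w y) :
    ∑ j ∈ S, A j * (w (g j) * deriv v (g j)) = v t - v s := by
  rw [← integral_eq_of_hasDerivAt_off_countable_of_le v _ hst hE hv hderiv hint, ← hquad]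
  refine Finset.sum_congr rfl fun j hj => ?_
  rw [(hderiv _ (hg j hj)).deriv, mul_div_cancel₀ _ (hw j hj)]

theorem notMem_Ioc_of_ne_interface {x : ℕ → ℝ} {N k i : ℕ} {α : ℝ} (hx : MonotoneOn x (Iic N))
    (hkN : k ≤ N) (hxα : x (k - 1) < α) (hαx : α < x k) (hiN : i ≤ N) (hik : i ≠ k) :
    α ∉ Ioc (x (i - 1)) (x i) := by
  rintro ⟨hα₁, hα₂⟩
  rcases lt_or_gt_of_ne hik with h | h
  · have := hx (mem_Iic.2 hiN) (mem_Iic.2 (by omega : k - 1 ≤ N)) (by omega : i ≤ k - 1)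
    linarith
  · have := hx (mem_Iic.2 hkN) (mem_Iic.2 (by omega : i - 1 ≤ N)) (by omega : k ≤ i - 1)
    linarith

theorem MemUT.exists_flux {p N k : ℕ} {a b α βm βp : ℝ} {x : ℕ → ℝ} {v : ℝ → ℝ}
    (hv : MemUT p N k a b α βm βp x v) (hβm : βm ≠ 0) (hβp : βp ≠ 0) (hx : MonotoneOn x (Iic N))
    (hkN : k ≤ N) (hxα : x (k - 1) < α) (hαx : α < x k) {i : ℕ} (hi1 : 1 ≤ i) (hiN : i ≤ N) :
    ∃ F : ℝ[X], F.natDegree ≤ p - 1 ∧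
      ∀ y ∈ Ioo (x (i - 1)) (x i) \ {α}, HasDerivAt v (F.eval y / betaPW βm βp α y) y := by
  obtain ⟨-, -, -, hpoly, qm, qp, hqm, hqp, hvm, hvp, hjump⟩ := hv
  by_cases hik : i = k
  · subst hik
    exact exists_flux_of_interface hβm hβp hqm hqp hvm hvp hjump
  · obtain ⟨q, hq, hvq⟩ := hpoly i hi1 hiN hik
    exact exists_flux_of_eqOn_Icc hβm hβp
      (notMem_Ioc_of_ne_interface hx hkN hxα hαx hiN hik) hq hvq

theorem stmt_7_general (p N k : ℕ)
    (a b α βm βp : ℝ) (hβm : 0 < βm) (hβp : 0 < βp)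
    (x : ℕ → ℝ) (g A : ℕ → ℕ → ℝ)
    (hmesh : 1 ≤ N ∧
      1 ≤ k ∧
      k ≤ N ∧
      a < b ∧
      x 0 = a ∧
      x N = b ∧
      (∀ i, i < N → x i < x (i + 1)) ∧
      x (k - 1) < α ∧
      α < x k ∧
      (∀ i ∈ Finset.Icc 1 N, ∀ j ∈ Finset.Icc 1 p,
      x (i - 1) < g i j ∧ g i j < x i ∧ g i j ≠ α) ∧
      (∀ i ∈ Finset.Icc 1 N, ∀ j, 1 ≤ j → j < p → g i j < g i (j + 1)) ∧
      (∀ i ∈ Finset.Icc 1 N, ∀ j ∈ Finset.Icc 1 p, 0 < A i j) ∧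
      (∀ i ∈ Finset.Icc 1 N, ∀ F : Polynomial ℝ, F.natDegree ≤ 2 * p - 1 →
      ∑ j ∈ Finset.Icc 1 p, A i j * F.eval (g i j)
        = ∫ t in (x (i - 1))..(x i), F.eval t / betaPW βm βp α t))
    (v : ℝ → ℝ) (hv : MemUT p N k a b α βm βp x v) :
    ∑ i ∈ Finset.Icc 1 N, ∑ j ∈ Finset.Icc 1 p,
      A i j * (betaPW βm βp α (g i j) * deriv v (g i j)) = 0 := by
  obtain ⟨-, -, hkN, -, hx0, hxN, hinc, hxα, hαx, hg, -, -, hquad⟩ := hmesh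
  have hx : MonotoneOn x (Iic N) := (strictMonoOn_Iic_of_lt_succ hinc).monotoneOn
  have element (i) (hi : i ∈ Finset.Icc 1 N) : ∑ j ∈ Finset.Icc 1 p,
      A i j * (betaPW βm βp α (g i j) * deriv v (g i j)) = v (x i) - v (x (i - 1)) := by
    obtain ⟨hi1, hiN⟩ := Finset.mem_Icc.1 hi
    obtain ⟨F, hFdeg, hF⟩ := hv.exists_flux hβm.ne' hβp.ne' hx hkN hxα hαx hi1 hiN
    have hmem {j} (hj : j ≤ N) : j ∈ Iic N := hj
    have hsub : Icc (x (i - 1)) (x i) ⊆ Icc a b := Icc_subset_Icc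
      (hx0 ▸ hx (hmem (Nat.zero_le _)) (hmem (by omega)) (Nat.zero_le _))
      (hxN ▸ hx (hmem hiN) (hmem le_rfl) hiN)
    refine sum_mul_deriv_eq_sub_of_quadrature (hx (hmem (by omega)) (hmem hiN) (by omega))
      (countable_singleton α) (hv.1.mono hsub) hF (F.intervalIntegrable_eval_div_betaPW _ _)
      (fun j hj => ?_) (fun j _ => betaPW_ne_zero hβm.ne' hβp.ne' _) (hquad i hi F (by omega))
    obtain ⟨hxg, hgx, hgα⟩ := hg i hi j hj
    exact ⟨⟨hxg, hgx⟩, hgα⟩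
  rw [Finset.sum_congr rfl element, Finset.sum_Icc_one_sub_pred (fun i => v (x i)), hx0, hxN,
    hv.2.1, hv.2.2.1, sub_self]

/-- for every `v` in the immersed trial space `U_T` (so `v(a) = v(b) = 0`),
the total weighted sum of fluxes at all generalized Gauss points vanishes:
`Σᵢ Σⱼ A_{i,j} β(g_{i,j}) v′(g_{i,j}) = 0`. -/
theorem stmt_7 (p N k : ℕ) (hp : 1 ≤ p)
    (a b α βm βp : ℝ) (hβm : 0 < βm) (hβp : 0 < βp)
    (x : ℕ → ℝ) (g A : ℕ → ℕ → ℝ)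
    (hmesh : 1 ≤ N ∧
      1 ≤ k ∧
      k ≤ N ∧
      a < b ∧
      x 0 = a ∧
      x N = b ∧
      (∀ i, i < N → x i < x (i + 1)) ∧
      x (k - 1) < α ∧
      α < x k ∧
      (∀ i ∈ Finset.Icc 1 N, ∀ j ∈ Finset.Icc 1 p,
      x (i - 1) < g i j ∧ g i j < x i ∧ g i j ≠ α) ∧
      (∀ i ∈ Finset.Icc 1 N, ∀ j, 1 ≤ j → j < p → g i j < g i (j + 1)) ∧
      (∀ i ∈ Finset.Icc 1 N, ∀ j ∈ Finset.Icc 1 p, 0 < A i j) ∧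
      (∀ i ∈ Finset.Icc 1 N, ∀ F : Polynomial ℝ, F.natDegree ≤ 2 * p - 1 →
      ∑ j ∈ Finset.Icc 1 p, A i j * F.eval (g i j)
        = ∫ t in (x (i - 1))..(x i), F.eval t / betaPW βm βp α t))
    (v : ℝ → ℝ) (hv : MemUT p N k a b α βm βp x v) :
    ∑ i ∈ Finset.Icc 1 N, ∑ j ∈ Finset.Icc 1 p,
      A i j * (betaPW βm βp α (g i j) * deriv v (g i j)) = 0 :=
  stmt_7_general p N k a b α βm βp hβm hβp x g A hmesh v hv
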